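/- Let A₁ be a positive-definite diagonal N×N matrix and K > 0. Suppose ζ, ã₁, ã₂ : ℝ → ℝᴺ satisfy A₁ζ̇ + Kζ = −μ diag(ã₁)v + 4T diag(ã₂)v, ã₁' = γ₁μ(v∘ζ), ã₂' = −4γ₂(v∘ζ∘T³) (componentwise products), where T = diag((T₂¹)³,…,(T₂ᴺ)³), γ₁, γ₂ > 0, μ > 0, and v, T₂ⁱ are arbitrary continuous functions. Then H(ζ, ã₁, ã₂) = ½ζᵀA₁ζ + ‖ã₁‖²/(2γ₁) + ‖ã₂‖²/(2γ₂) satisfies Ḣ = −K‖ζ‖² ≤ 0 along trajectories. -/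

import Mathlib

open Finset

section WeightedSumOfSquares

variable {ι : Type*} [Fintype ι] {x : ℝ → ι → ℝ} {x' : ι → ℝ} {t : ℝ}

theorem hasDerivAt_sum_mul_sq (c : ι → ℝ) (hx : ∀ i, HasDerivAt (fun s => x s i) (x' i) t) :
    HasDerivAt (fun s => ∑ i, c i * x s i ^ 2) (∑ i, c i * (2 * x t i * x' i)) t := by
  refine HasDerivAt.fun_sum fun i _ => ?_
  simpa using ((hx i).fun_pow 2).const_mul (c i)

theorem hasDerivAt_sum_sq (hx : ∀ i, HasDerivAt (fun s => x s i) (x' i) t) :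
    HasDerivAt (fun s => ∑ i, x s i ^ 2) (∑ i, 2 * x t i * x' i) t := by
  simpa using hasDerivAt_sum_mul_sq 1 hx

end WeightedSumOfSquares

/-- The adaptation laws are chosen exactly so that the parameter-error terms cancel the
cross terms `ζ·(−μ ã₁ v + 4 T³ ã₂ v)` produced by the error dynamics. -/
theorem lyapunov_rate_eq_of_dynamics {A K μ γ₁ γ₂ z z' a b v T : ℝ}
    (hγ₁ : γ₁ ≠ 0) (hγ₂ : γ₂ ≠ 0)
    (hdyn : A * z' + K * z = -μ * (a * v) + 4 * (T ^ 3 * (b * v))) :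
    1 / 2 * (A * (2 * z * z')) + 2 * a * (γ₁ * μ * (v * z)) / (2 * γ₁)
      + 2 * b * (-(4 * γ₂) * (v * z * T ^ 3)) / (2 * γ₂) = -K * z ^ 2 := by
  field_simp
  linear_combination z * hdyn

theorem adaptive_lyapunov_derivative_general
    (N : ℕ) (A₁ : Fin N → ℝ)
    (K μ γ₁ γ₂ : ℝ) (hK : 0 < K) (hγ₁ : 0 < γ₁) (hγ₂ : 0 < γ₂)
    (ζ ζ' a₁ a₂ v T₂ : ℝ → Fin N → ℝ)
    (hζ : ∀ t i, HasDerivAt (fun s => ζ s i) (ζ' t i) t)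
    (hdyn : ∀ t i, A₁ i * ζ' t i + K * ζ t i =
        -μ * (a₁ t i * v t i) + 4 * ((T₂ t i) ^ 3 * (a₂ t i * v t i)))
    (ha₁ : ∀ t i, HasDerivAt (fun s => a₁ s i) (γ₁ * μ * (v t i * ζ t i)) t)
    (ha₂ : ∀ t i, HasDerivAt (fun s => a₂ s i)
        (-(4 * γ₂) * (v t i * ζ t i * (T₂ t i) ^ 3)) t) :
    ∀ t, HasDerivAt
        (fun s => (1 / 2) * ∑ i, A₁ i * (ζ s i) ^ 2
          + (∑ i, (a₁ s i) ^ 2) / (2 * γ₁)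
          + (∑ i, (a₂ s i) ^ 2) / (2 * γ₂))
        (-K * ∑ i, (ζ t i) ^ 2) t ∧ -K * ∑ i, (ζ t i) ^ 2 ≤ 0 := by
  intro t
  have hH := (((hasDerivAt_sum_mul_sq A₁ (hζ t)).const_mul (1 / 2)).fun_add
    ((hasDerivAt_sum_sq (ha₁ t)).div_const (2 * γ₁))).fun_add
    ((hasDerivAt_sum_sq (ha₂ t)).div_const (2 * γ₂))
  refine ⟨hH.congr_deriv ?_, ?_⟩
  · rw [mul_sum, sum_div, sum_div, mul_sum, ← sum_add_distrib, ← sum_add_distrib]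
    exact sum_congr rfl fun i _ => lyapunov_rate_eq_of_dynamics hγ₁.ne' hγ₂.ne' (hdyn t i)
  · exact mul_nonpos_of_nonpos_of_nonneg (neg_nonpos.2 hK.le) (sum_nonneg fun i _ => sq_nonneg _)

/-- along trajectories of the adaptive closed-loop system, the
Lyapunov function `H = ½ζᵀA₁ζ + ‖ã₁‖²/(2γ₁) + ‖ã₂‖²/(2γ₂)` satisfies
`Ḣ = −K‖ζ‖² ≤ 0`.  Everything is written componentwise: `A₁` is the
(positive) diagonal of the matrix `A₁`, and `T = diag((T₂ⁱ)³)`. -/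
theorem adaptive_lyapunov_derivative
    (N : ℕ) (A₁ : Fin N → ℝ) (hA₁ : ∀ i, 0 < A₁ i)
    (K μ γ₁ γ₂ : ℝ) (hK : 0 < K) (hμ : 0 < μ) (hγ₁ : 0 < γ₁) (hγ₂ : 0 < γ₂)
    (ζ ζ' a₁ a₂ v T₂ : ℝ → Fin N → ℝ)
    (hvcont : ∀ i, Continuous fun t => v t i)
    (hTcont : ∀ i, Continuous fun t => T₂ t i)
    (hζ : ∀ t i, HasDerivAt (fun s => ζ s i) (ζ' t i) t)
    (hdyn : ∀ t i, A₁ i * ζ' t i + K * ζ t i =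
        -μ * (a₁ t i * v t i) + 4 * ((T₂ t i) ^ 3 * (a₂ t i * v t i)))
    (ha₁ : ∀ t i, HasDerivAt (fun s => a₁ s i) (γ₁ * μ * (v t i * ζ t i)) t)
    (ha₂ : ∀ t i, HasDerivAt (fun s => a₂ s i)
        (-(4 * γ₂) * (v t i * ζ t i * (T₂ t i) ^ 3)) t) :
    ∀ t, HasDerivAt
        (fun s => (1 / 2) * ∑ i, A₁ i * (ζ s i) ^ 2
          + (∑ i, (a₁ s i) ^ 2) / (2 * γ₁)
          + (∑ i, (a₂ s i) ^ 2) / (2 * γ₂))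
        (-K * ∑ i, (ζ t i) ^ 2) t ∧ -K * ∑ i, (ζ t i) ^ 2 ≤ 0 :=
  adaptive_lyapunov_derivative_general N A₁ K μ γ₁ γ₂ hK hγ₁ hγ₂ ζ ζ' a₁ a₂ v T₂ hζ hdyn ha₁ ha₂
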